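/- Fix d ≥ 1, A ∈ 𝓡, r ≥ 0, and T ∈ (0,∞) with m(T) > 0. Suppose Assumption 1.1 holds, Assumption 3.2 holds at T, the claim vectors {X^(i), i ≥ 1} are RD_A, and the tail F̄_A(x) := P(X ∈ x·A) is positive for every x > 0. Define J_x(T) := Σ_{i≥1} 1{X^(i) e^{−r τ_i} ∈ x·A, τ_i ≤ T} and Λ_x := E[J_x(T)] = ∫_{[0,T]} P(X e^{−r s} ∈ x·A) ν(ds). Then Λ_x > 0 for all x > 0, Λ_x → 0 as x → ∞, and P(J_x(T) ≥ 2) = O(Λ_x²) = o(Λ_x) as x → ∞. -/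

import Mathlib

open MeasureTheory ProbabilityTheory Filter Topology Set
open scoped Pointwise ENNReal NNReal

noncomputable section

/-- The family `𝓡` of open increasing subsets of `ℝ^d` with convex complement,
whose closure avoids the origin. -/
def InRfam (d : ℕ) (A : Set (Fin d → ℝ)) : Prop :=
  IsOpen A ∧ (∀ x ∈ A, ∀ z : Fin d → ℝ, (∀ i, 0 ≤ z i) → x + z ∈ A) ∧
    Convex ℝ Aᶜ ∧ (0 : Fin d → ℝ) ∉ closure A

/-- The functional `z ↦ z_A = sup {u > 0 : z ∈ u • A}` (real `sSup`, so `sup ∅ = 0`). -/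
def projA {d : ℕ} (A : Set (Fin d → ℝ)) (z : Fin d → ℝ) : ℝ :=
  sSup {u : ℝ | 0 < u ∧ z ∈ u • A}

/-- The tail `Ḡ_A(x) = P(Z_A > x)` of the one-dimensional distribution `G_A`
associated with a distribution `G` on `ℝ^d` and a set `A ∈ 𝓡`. -/
def tailA {d : ℕ} (A : Set (Fin d → ℝ)) (G : Measure (Fin d → ℝ)) (x : ℝ) : ℝ :=
  (G {z | x < projA A z}).toReal

/-- Product of two measures (via `bind`, no instance assumptions). -/
def mprod {α β : Type*} [MeasurableSpace α] [MeasurableSpace β]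
    (μ : Measure α) (ν : Measure β) : Measure (α × β) :=
  μ.bind fun a => ν.map (Prod.mk a)

/-- Tail at `x` of `Z¹_A + Z²_A` for independent `Z¹ ∼ G₁`, `Z² ∼ G₂`. -/
def tail2A {d : ℕ} (A : Set (Fin d → ℝ)) (G₁ G₂ : Measure (Fin d → ℝ)) (x : ℝ) : ℝ :=
  ((mprod G₁ G₂) {p | x < projA A p.1 + projA A p.2}).toReal

/-- `G ∈ 𝒮_A`: the distribution `G_A` has everywhere positive tail and is
subexponential, i.e. `P(Z¹_A + Z²_A > x) ∼ 2 Ḡ_A(x)` for independent copies. -/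
def SubexpA {d : ℕ} (A : Set (Fin d → ℝ)) (G : Measure (Fin d → ℝ)) : Prop :=
  (∀ x : ℝ, 0 < tailA A G x) ∧
    Tendsto (fun x => tail2A A G G x / tailA A G x) atTop (𝓝 2)

/-- Convolution: the law of the sum of independent draws from `μ` and `ν`. -/
def mconv {d : ℕ} (μ ν : Measure (Fin d → ℝ)) : Measure (Fin d → ℝ) :=
  (mprod μ ν).map fun p => p.1 + p.2

/-- Regression dependence with explicit constants `x₀, K`, in integrated form:
for every index `i`, finite nonempty `J` not containing `i`, level `xi > x₀` and
measurable set `S` of conditioning values all `> x₀`,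
`P(Z_i > xi, (Z_j)_{j∈J} ∈ S) ≤ K · Ḡ_i(xi) · P((Z_j)_{j∈J} ∈ S)`. -/
def RDwith {Ω : Type*} [MeasurableSpace Ω] (P : Measure Ω) (x₀ K : ℝ)
    {ι : Type*} (Z : ι → Ω → ℝ) : Prop :=
  ∀ i : ι, ∀ J : Finset ι, J.Nonempty → i ∉ J → ∀ xi : ℝ, x₀ < xi →
    ∀ S : Set (J → ℝ), MeasurableSet S → (∀ v ∈ S, ∀ j : J, x₀ < v j) →
      (P {ω | xi < Z i ω ∧ (fun j : J => Z j.1 ω) ∈ S}).toReal ≤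
        K * (P {ω | xi < Z i ω}).toReal * (P {ω | (fun j : J => Z j.1 ω) ∈ S}).toReal

/-- Regression dependence (`RD`). -/
def RD {Ω : Type*} [MeasurableSpace Ω] (P : Measure Ω) {ι : Type*} (Z : ι → Ω → ℝ) : Prop :=
  ∃ x₀ > (0 : ℝ), ∃ K > (0 : ℝ), RDwith P x₀ K Z

/-- `RD_A` for random vectors: the projections `Z^{(i)}_A` are `RD`. -/
def RDA {Ω : Type*} [MeasurableSpace Ω] (P : Measure Ω) {d : ℕ} (A : Set (Fin d → ℝ))
    {ι : Type*} (Z : ι → Ω → Fin d → ℝ) : Prop :=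
  RD P fun i ω => projA A (Z i ω)

/-- Quasi asymptotic independence (`QAI`). -/
def QAI {Ω : Type*} [MeasurableSpace Ω] (P : Measure Ω) {ι : Type*} (Z : ι → Ω → ℝ) : Prop :=
  ∀ i j : ι, i ≠ j →
    Tendsto (fun x : ℝ => (P {ω | x < Z i ω ∧ x < Z j ω}).toReal /
      ((P {ω | x < Z i ω}).toReal + (P {ω | x < Z j ω}).toReal)) atTop (𝓝 0)

/-- `QAI_A` for random vectors: the projections `Z^{(i)}_A` are `QAI`. -/
def QAIA {Ω : Type*} [MeasurableSpace Ω] (P : Measure Ω) {d : ℕ} (A : Set (Fin d → ℝ))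
    {ι : Type*} (Z : ι → Ω → Fin d → ℝ) : Prop :=
  QAI P fun i ω => projA A (Z i ω)

/-- The consistent variation class `𝒞` for a tail function `g`. -/
def ClassC (g : ℝ → ℝ) : Prop :=
  Tendsto (fun b : ℝ => limsup (fun x => g (b * x) / g x) atTop) (𝓝[<] (1 : ℝ)) (𝓝 1)

/-- The positively decreasing class `𝒫_𝒟` for a tail function `g`. -/
def ClassPD (g : ℝ → ℝ) : Prop :=
  ∃ v > (1 : ℝ), limsup (fun x => g (v * x) / g x) atTop < 1

/-- Upper Matuszewska index of a tail function. -/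
def Jplus (g : ℝ → ℝ) : ℝ :=
  -limUnder atTop fun v : ℝ => Real.log (liminf (fun x => g (v * x) / g x) atTop) / Real.log v

/-- Lower Matuszewska index of a tail function. -/
def Jminus (g : ℝ → ℝ) : ℝ :=
  -limUnder atTop fun v : ℝ => Real.log (limsup (fun x => g (v * x) / g x) atTop) / Real.log v

/-- `F ∈ MRV(α, μ)` with associated regularly varying tail `Vbar`: `Vbar` is the
tail of a distribution on `ℝ`, regularly varying with index `−α`; `μ` is a nonzero
measure, finite on Borel sets at positive distance from the origin; and
`P(X ∈ x • B)/Vbar x → μ(B)` for all such `B` with `μ(∂B) = 0`. -/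
def IsMRV {d : ℕ} (F : Measure (Fin d → ℝ)) (α : ℝ) (μ : Measure (Fin d → ℝ))
    (Vbar : ℝ → ℝ) : Prop :=
  (∃ V : Measure ℝ, IsProbabilityMeasure V ∧ ∀ x : ℝ, Vbar x = (V (Ioi x)).toReal) ∧
    (∀ᶠ x in atTop, 0 < Vbar x) ∧
    (∀ t : ℝ, 0 < t → Tendsto (fun x => Vbar (t * x) / Vbar x) atTop (𝓝 (t ^ (-α)))) ∧
    μ ≠ 0 ∧
    (∀ B : Set (Fin d → ℝ), MeasurableSet B → (∃ ε > (0 : ℝ), ∀ z ∈ B, ε ≤ ‖z‖) → μ B ≠ ⊤) ∧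
    (∀ B : Set (Fin d → ℝ), MeasurableSet B → (∃ ε > (0 : ℝ), ∀ z ∈ B, ε ≤ ‖z‖) →
      μ (frontier B) = 0 →
      Tendsto (fun x => (F (x • B)).toReal / Vbar x) atTop (𝓝 ((μ B).toReal)))

/-- Second factorial moment measure `α⁽²⁾` of the point process with points `τ i`:
the mean measure of the off-diagonal pairs `(τ i, τ j)`, `i ≠ j`. -/
def secondFactorial {Ω : Type*} [MeasurableSpace Ω] (P : Measure Ω) (τ : ℕ → Ω → ℝ) :
    Measure (ℝ × ℝ) :=
  Measure.sum fun p : {p : ℕ × ℕ // p.1 ≠ p.2} =>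
    P.map fun ω => (τ p.1.1 ω, τ p.1.2 ω)

/-- The product measure `ν × ν`, where `ν(B) = ∑ᵢ P(τᵢ ∈ B)` is the mean measure. -/
def nuProd {Ω : Type*} [MeasurableSpace Ω] (P : Measure Ω) (τ : ℕ → Ω → ℝ) :
    Measure (ℝ × ℝ) :=
  Measure.sum fun p : ℕ × ℕ => mprod (P.map (τ p.1)) (P.map (τ p.2))

/-- Assumption 3.2 at horizon `T` with constant `C`:
`α⁽²⁾(B) ≤ C · (ν × ν)(B)` for every Borel `B ⊆ [0,T]²`. -/
def Assumption32 {Ω : Type*} [MeasurableSpace Ω] (P : Measure Ω) (τ : ℕ → Ω → ℝ)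
    (T C : ℝ) : Prop :=
  ∀ B : Set (ℝ × ℝ), MeasurableSet B → B ⊆ Icc (0 : ℝ) T ×ˢ Icc (0 : ℝ) T →
    secondFactorial P τ B ≤ ENNReal.ofReal C * nuProd P τ B

/-- Discounted aggregate claims up to a finite time `T`. -/
def Dfin {Ω : Type*} {d : ℕ} (r : ℝ) (X : ℕ → Ω → Fin d → ℝ) (τ : ℕ → Ω → ℝ)
    (T : ℝ) (ω : Ω) : Fin d → ℝ :=
  ∑' i : ℕ, Set.indicator {ω' | τ i ω' ≤ T} (fun ω' => Real.exp (-(r * τ i ω')) • X i ω') ω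

/-- Discounted aggregate claims over the infinite time horizon. -/
def Dinf {Ω : Type*} {d : ℕ} (r : ℝ) (X : ℕ → Ω → Fin d → ℝ) (τ : ℕ → Ω → ℝ)
    (ω : Ω) : Fin d → ℝ :=
  ∑' i : ℕ, Real.exp (-(r * τ i ω)) • X i ω

/-- `J_x(T)`: the number of discounted claims entering `x • A` by time `T`. -/
def Jcount {Ω : Type*} {d : ℕ} (r : ℝ) (X : ℕ → Ω → Fin d → ℝ) (τ : ℕ → Ω → ℝ)
    (A : Set (Fin d → ℝ)) (T x : ℝ) (ω : Ω) : ℝ≥0∞ :=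
  ∑' i : ℕ,
    Set.indicator {ω' | τ i ω' ≤ T ∧ Real.exp (-(r * τ i ω')) • X i ω' ∈ x • A}
      (fun _ => (1 : ℝ≥0∞)) ω

/-- Pathwise discounted stochastic integral `∫₀ᵗ e^{−rs} B(ds)
  = e^{−rt} B(t) + r ∫₀ᵗ e^{−rs} B(s) ds`. -/
def discBM {Ω : Type*} (r : ℝ) (Bi : ℝ → Ω → ℝ) (t : ℝ) (ω : Ω) : ℝ :=
  Real.exp (-(r * t)) * Bi t ω + r * ∫ s in (0 : ℝ)..t, Real.exp (-(r * s)) * Bi s ω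

/-- The insurer's surplus process `U(t)`. -/
def surplus {Ω : Type*} {d : ℕ} (r x : ℝ) (l : Fin d → ℝ) (c : Fin d → ℝ → Ω → ℝ)
    (δv : Fin d → ℝ) (Bm : Fin d → ℝ → Ω → ℝ) (X : ℕ → Ω → Fin d → ℝ) (τ : ℕ → Ω → ℝ)
    (t : ℝ) (ω : Ω) : Fin d → ℝ :=
  fun k => x * l k + (∫ s in (0 : ℝ)..t, Real.exp (-(r * s)) * c k s ω)
    + δv k * discBM r (Bm k) t ω - Dfin r X τ t ω k

/-!
Write `Z_i = X^{(i)}_A`, `Ḡ(u) = P(Z_i > u)` and `E_i(x) = {τ_i ≤ T, x e^{r τ_i} < Z_i}`, so that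
`Λ_x = ∑ P(E_i(x))` and `J_x(T) = ∑ 1_{E_i(x)}`. Independence of claims and arrival times gives
`P(E_i(x)) = ∫ h_x dP_{τ_i}` with `h_x(s) = 1_{[0,T]}(s) Ḡ(x e^{rs})`, hence
`Ḡ(x e^{rT}) m(T) ≤ Λ_x ≤ Ḡ(x) m(T)`. On `{J_x(T) ≥ 2}` two distinct events `E_i, E_j` occur;
regression dependence bounds `P(E_i ∩ E_j)` by `K ∫ h_x ⊗ h_x dP_{(τ_i, τ_j)}`, and summing over
`i ≠ j` gives `K ∫ h_x ⊗ h_x dα⁽²⁾ ≤ K C ∫ h_x ⊗ h_x d(ν × ν) = K C Λ_x²`.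
-/

namespace InRfam

variable {d : ℕ} {A : Set (Fin d → ℝ)}

lemma exists_pos_le_norm (hA : InRfam d A) : ∃ ε > 0, ∀ z ∈ A, ε ≤ ‖z‖ := by
  have h0 := hA.2.2.2
  rw [Metric.mem_closure_iff] at h0
  push Not at h0
  obtain ⟨ε, hε, h⟩ := h0
  exact ⟨ε, hε, fun z hz => by simpa [dist_eq_norm] using h z hz⟩

lemma bddAbove_smul_mem (hA : InRfam d A) (z : Fin d → ℝ) :
    BddAbove {u : ℝ | 0 < u ∧ z ∈ u • A} := by
  obtain ⟨ε, hε, hεA⟩ := hA.exists_pos_le_norm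
  refine ⟨‖z‖ / ε, fun u ⟨hu, a, ha, hz⟩ => ?_⟩
  rw [← hz, norm_smul, Real.norm_of_nonneg hu.le, le_div_iff₀ hε]
  exact mul_le_mul_of_nonneg_left (hεA a ha) hu.le

lemma lt_projA_iff (hA : InRfam d A) {z : Fin d → ℝ} {u : ℝ} (hu : 0 ≤ u) :
    u < projA A z ↔ ∃ v, u < v ∧ z ∈ v • A := by
  constructor
  · intro h
    have hne : {v : ℝ | 0 < v ∧ z ∈ v • A}.Nonempty := by
      by_contra hempty
      rw [not_nonempty_iff_eq_empty] at hempty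
      rw [projA, hempty, Real.sSup_empty] at h
      linarith
    obtain ⟨v, ⟨-, hv⟩, huv⟩ := exists_lt_of_lt_csSup hne h
    exact ⟨v, huv, hv⟩
  · rintro ⟨v, huv, hv⟩
    exact huv.trans_le (le_csSup (hA.bddAbove_smul_mem z) ⟨hu.trans_lt huv, hv⟩)

lemma lowerSemicontinuous_projA (hA : InRfam d A) : LowerSemicontinuous (projA A) := by
  refine lowerSemicontinuous_iff_isOpen_preimage.mpr fun u => ?_
  rcases lt_or_ge u 0 with hu | hu
  · convert isOpen_univ
    exact eq_univ_of_forall fun z => hu.trans_le (Real.sSup_nonneg fun v hv => hv.1.le)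
  · have : projA A ⁻¹' Ioi u = ⋃ v ∈ Ioi u, v • A := by
      ext z
      simp [hA.lt_projA_iff hu]
    rw [this]
    exact isOpen_biUnion fun v hv => hA.1.smul₀ (hu.trans_lt hv).ne'

lemma measurable_projA (hA : InRfam d A) : Measurable (projA A) :=
  hA.lowerSemicontinuous_projA.measurable

lemma mem_smul_of_le (hA : InRfam d A) {z : Fin d → ℝ} (hz : 0 ≤ z) {u v : ℝ} (hu : 0 < u)
    (huv : u ≤ v) (hv : z ∈ v • A) : z ∈ u • A := by
  obtain ⟨a, ha, rfl⟩ := hv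
  have hv0 : 0 < v := hu.trans_le huv
  have ha0 : 0 ≤ a := fun k => nonneg_of_mul_nonneg_right (hz k) hv0
  refine ⟨(v / u) • a, ?_, by simp only [smul_smul, mul_div_cancel₀ _ hu.ne']⟩
  have hvu : 0 ≤ v / u - 1 := by rw [sub_nonneg, one_le_div hu]; exact huv
  convert hA.2.1 a ha ((v / u - 1) • a) fun k => mul_nonneg hvu (ha0 k) using 1
  rw [sub_smul, one_smul, add_sub_cancel]

lemma lt_projA_of_mem_smul (hA : InRfam d A) {z : Fin d → ℝ} {u : ℝ} (hu : 0 < u)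
    (h : z ∈ u • A) : u < projA A z := by
  rw [hA.lt_projA_iff hu.le]
  rw [mem_smul_set_iff_inv_smul_mem₀ hu.ne'] at h
  have hnear : ∀ᶠ v in 𝓝[>] u, v⁻¹ • z ∈ A :=
    nhdsWithin_le_nhds (((tendsto_inv₀ hu.ne').smul_const z).eventually (hA.1.mem_nhds h))
  obtain ⟨v, hvA, huv⟩ := (hnear.and self_mem_nhdsWithin).exists
  exact ⟨v, huv, (mem_smul_set_iff_inv_smul_mem₀ (hu.trans huv).ne' _ _).mpr hvA⟩

lemma mem_smul_iff_lt_projA (hA : InRfam d A) {z : Fin d → ℝ} (hz : 0 ≤ z) {u : ℝ}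
    (hu : 0 < u) : z ∈ u • A ↔ u < projA A z := by
  refine ⟨hA.lt_projA_of_mem_smul hu, fun h => ?_⟩
  obtain ⟨v, huv, hv⟩ := (hA.lt_projA_iff hu.le).mp h
  exact hA.mem_smul_of_le hz hu huv.le hv

lemma exp_neg_smul_mem_smul_iff (hA : InRfam d A) {z : Fin d → ℝ} (hz : 0 ≤ z) {x : ℝ}
    (hx : 0 < x) (a : ℝ) : Real.exp (-a) • z ∈ x • A ↔ x * Real.exp a < projA A z := by
  rw [← hA.mem_smul_iff_lt_projA hz (by positivity), mem_smul_set_iff_inv_smul_mem₀ hx.ne',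
    mem_smul_set_iff_inv_smul_mem₀ (by positivity), smul_smul, mul_inv, Real.exp_neg]

end InRfam

lemma tendsto_measure_setOf_lt_atTop {α : Type*} [MeasurableSpace α] {μ : Measure α}
    [IsFiniteMeasure μ] {f : α → ℝ} (hf : Measurable f) :
    Tendsto (fun x : ℝ => μ {a | x < f a}) atTop (𝓝 0) := by
  have h := tendsto_measure_iInter_atTop (μ := μ) (s := fun x : ℝ => {a | x < f a})
    (fun x => (measurableSet_lt measurable_const hf).nullMeasurableSet)
    (fun x y hxy a ha => hxy.trans_lt ha) ⟨0, measure_ne_top μ _⟩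
  have hempty : ⋂ x : ℝ, {a | x < f a} = ∅ :=
    eq_empty_of_forall_notMem fun a ha => lt_irrefl (f a) (mem_iInter.mp ha (f a))
  rwa [hempty, measure_empty] at h

lemma ProbabilityTheory.IndepFun.measure_preimage_eq_lintegral {Ω β γ : Type*}
    [MeasurableSpace Ω] [MeasurableSpace β] [MeasurableSpace γ] {P : Measure Ω}
    [IsFiniteMeasure P] {Y : Ω → β} {W : Ω → γ} (h : IndepFun Y W P) (hY : Measurable Y)
    (hW : Measurable W) {S : Set (β × γ)} (hS : MeasurableSet S) :
    P ((fun ω => (Y ω, W ω)) ⁻¹' S) = ∫⁻ w, P.map Y ((fun y => (y, w)) ⁻¹' S) ∂P.map W := by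
  rw [← Measure.map_apply (hY.prodMk hW) hS,
    h.map_prod_eq_prod_map_map hY.aemeasurable hW.aemeasurable, Measure.prod_apply_symm hS]

lemma setOf_two_le_tsum_indicator_subset {Ω : Type*} (E : ℕ → Set Ω) :
    {ω | 2 ≤ ∑' i, (E i).indicator (fun _ => (1 : ℝ≥0∞)) ω} ⊆
      ⋃ p : {p : ℕ × ℕ // p.1 ≠ p.2}, E p.1.1 ∩ E p.1.2 := by
  intro ω hω
  by_contra hnot
  simp only [mem_iUnion, mem_inter_iff, not_exists, not_and] at hnot
  have hle : ∑' i, (E i).indicator (fun _ => (1 : ℝ≥0∞)) ω ≤ 1 := by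
    by_cases hex : ∃ i, ω ∈ E i
    · obtain ⟨i, hi⟩ := hex
      rw [tsum_eq_single i fun j hj => indicator_of_notMem (fun hj' => hnot ⟨(j, i), hj⟩ hj' hi) _]
      exact indicator_apply_le' (fun _ => le_rfl) fun _ => zero_le_one
    · push Not at hex
      simp [indicator_of_notMem (hex _)]
  exact absurd (hω.trans hle) (by norm_num)

lemma lintegral_nuProd_mul_eq_sq {Ω : Type*} [MeasurableSpace Ω] (P : Measure Ω) [SFinite P]
    (τ : ℕ → Ω → ℝ) {g : ℝ → ℝ≥0∞} (hg : Measurable g) :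
    ∫⁻ p, g p.1 * g p.2 ∂nuProd P τ = (∑' i, ∫⁻ s, g s ∂P.map (τ i)) ^ 2 := by
  rw [nuProd, lintegral_sum_measure, sq, ENNReal.tsum_prod', ← ENNReal.tsum_mul_right]
  refine tsum_congr fun i => ?_
  rw [← ENNReal.tsum_mul_left]
  refine tsum_congr fun j => ?_
  rw [mprod, ← Measure.prod_def, lintegral_prod_mul hg.aemeasurable hg.aemeasurable]

lemma Assumption32.lintegral_secondFactorial_le {Ω : Type*} [MeasurableSpace Ω]
    {P : Measure Ω} {τ : ℕ → Ω → ℝ} {T C : ℝ} (h32 : Assumption32 P τ T C)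
    {f : ℝ × ℝ → ℝ≥0∞} (hf : f.support ⊆ Icc 0 T ×ˢ Icc 0 T) :
    ∫⁻ p, f p ∂secondFactorial P τ ≤ ENNReal.ofReal C * ∫⁻ p, f p ∂nuProd P τ := by
  have hR : MeasurableSet (Icc (0 : ℝ) T ×ˢ Icc 0 T) := measurableSet_Icc.prod measurableSet_Icc
  have hle : (secondFactorial P τ).restrict (Icc 0 T ×ˢ Icc 0 T) ≤
      (ENNReal.ofReal C • nuProd P τ).restrict (Icc 0 T ×ˢ Icc 0 T) := by
    refine Measure.le_iff.mpr fun s hs => ?_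
    rw [Measure.restrict_apply hs, Measure.restrict_apply hs, Measure.smul_apply, smul_eq_mul]
    exact h32 _ (hs.inter hR) inter_subset_right
  calc ∫⁻ p, f p ∂secondFactorial P τ
      = ∫⁻ p in Icc 0 T ×ˢ Icc 0 T, f p ∂secondFactorial P τ :=
        (setLIntegral_eq_of_support_subset hf).symm
    _ ≤ ∫⁻ p in Icc 0 T ×ˢ Icc 0 T, f p ∂(ENNReal.ofReal C • nuProd P τ) :=
        lintegral_mono' hle le_rfl
    _ = ENNReal.ofReal C * ∫⁻ p in Icc 0 T ×ˢ Icc 0 T, f p ∂nuProd P τ := by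
        rw [Measure.restrict_smul, lintegral_smul_measure, smul_eq_mul]
    _ ≤ ENNReal.ofReal C * ∫⁻ p, f p ∂nuProd P τ := by
        gcongr
        exact Measure.restrict_le_self

lemma RDwith.measure_lt_inter_lt_le {Ω : Type*} [MeasurableSpace Ω] {P : Measure Ω}
    [IsFiniteMeasure P] {x₀ K : ℝ} {Z : ℕ → Ω → ℝ} (hRD : RDwith P x₀ K Z) (hK : 0 ≤ K)
    {i j : ℕ} (hij : i ≠ j) {a b : ℝ} (ha : x₀ < a) (hb : x₀ < b) :
    P {ω | a < Z i ω ∧ b < Z j ω} ≤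
      ENNReal.ofReal K * P {ω | a < Z i ω} * P {ω | b < Z j ω} := by
  have hRDij := hRD i {j} (Finset.singleton_nonempty j) (by simpa using hij) a ha
    {v | b < v ⟨j, Finset.mem_singleton_self j⟩}
    (measurableSet_lt measurable_const (measurable_pi_apply _))
    fun v hv k => by
      rw [Subsingleton.elim k ⟨j, Finset.mem_singleton_self j⟩]
      exact hb.trans hv
  calc P {ω | a < Z i ω ∧ b < Z j ω}
      = ENNReal.ofReal (P {ω | a < Z i ω ∧ b < Z j ω}).toReal :=
        (ENNReal.ofReal_toReal (measure_ne_top P _)).symm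
    _ ≤ ENNReal.ofReal (K * (P {ω | a < Z i ω}).toReal * (P {ω | b < Z j ω}).toReal) :=
        ENNReal.ofReal_le_ofReal hRDij
    _ = ENNReal.ofReal K * P {ω | a < Z i ω} * P {ω | b < Z j ω} := by
        rw [ENNReal.ofReal_mul (by positivity), ENNReal.ofReal_mul hK,
          ENNReal.ofReal_toReal (measure_ne_top P _), ENNReal.ofReal_toReal (measure_ne_top P _)]

section ArrivalEvents

variable {Ω : Type*} [MeasurableSpace Ω] {P : Measure Ω} [IsFiniteMeasure P]
  {Z τ : ℕ → Ω → ℝ} {G : ℝ → ℝ≥0∞} {r T x : ℝ}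

def arrivalEvent (Z τ : ℕ → Ω → ℝ) (r T x : ℝ) (i : ℕ) : Set Ω :=
  {ω | τ i ω ∈ Icc 0 T ∧ x * Real.exp (r * τ i ω) < Z i ω}

def discountedTail (G : ℝ → ℝ≥0∞) (r T x : ℝ) : ℝ → ℝ≥0∞ :=
  (Icc 0 T).indicator fun s => G (x * Real.exp (r * s))

lemma measurable_discountedTail (hG : Antitone G) : Measurable (discountedTail G r T x) :=
  (hG.measurable.comp (by fun_prop)).indicator measurableSet_Icc

lemma measure_arrivalEvent {i : ℕ} (hZ : Measurable (Z i)) (hτ : Measurable (τ i))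
    (hind : IndepFun (Z i) (τ i) P) (hG : ∀ u, P {ω | u < Z i ω} = G u) :
    P (arrivalEvent Z τ r T x i) = ∫⁻ s, discountedTail G r T x s ∂P.map (τ i) := by
  have hS : MeasurableSet {p : ℝ × ℝ | p.2 ∈ Icc 0 T ∧ x * Real.exp (r * p.2) < p.1} :=
    (measurable_snd measurableSet_Icc).inter (measurableSet_lt (by fun_prop) measurable_fst)
  refine (hind.measure_preimage_eq_lintegral hZ hτ hS).trans (lintegral_congr fun s => ?_)
  by_cases hs : s ∈ Icc 0 T
  · have hslice : (fun z => (z, s)) ⁻¹' {p : ℝ × ℝ | p.2 ∈ Icc 0 T ∧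
        x * Real.exp (r * p.2) < p.1} = Ioi (x * Real.exp (r * s)) := by
      ext z
      simp only [mem_preimage, mem_ofPred_eq, hs, true_and, mem_Ioi]
    rw [hslice, Measure.map_apply hZ measurableSet_Ioi, discountedTail, indicator_of_mem hs,
      ← hG]
    rfl
  · have hslice : (fun z => (z, s)) ⁻¹' {p : ℝ × ℝ | p.2 ∈ Icc 0 T ∧
        x * Real.exp (r * p.2) < p.1} = ∅ := by
      ext z
      simp only [mem_preimage, mem_ofPred_eq, hs, false_and, mem_empty_iff_false]
    rw [hslice, measure_empty, discountedTail, indicator_of_notMem hs]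

lemma measure_arrivalEvent_inter_le {x₀ K : ℝ} (hRD : RDwith P x₀ K Z) (hK : 0 ≤ K)
    (hr : 0 ≤ r) (hx₀ : 0 ≤ x₀) (hx : x₀ < x) {i j : ℕ} (hij : i ≠ j)
    (hZ : ∀ i, Measurable (Z i)) (hτ : ∀ i, Measurable (τ i))
    (hind : IndepFun (fun ω => (Z i ω, Z j ω)) (fun ω => (τ i ω, τ j ω)) P)
    (hG : ∀ i u, P {ω | u < Z i ω} = G u) :
    P (arrivalEvent Z τ r T x i ∩ arrivalEvent Z τ r T x j) ≤ ENNReal.ofReal K *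
      ∫⁻ q, discountedTail G r T x q.1 * discountedTail G r T x q.2
        ∂P.map fun ω => (τ i ω, τ j ω) := by
  have hS : MeasurableSet {q : (ℝ × ℝ) × (ℝ × ℝ) |
      (q.2.1 ∈ Icc 0 T ∧ x * Real.exp (r * q.2.1) < q.1.1) ∧
        (q.2.2 ∈ Icc 0 T ∧ x * Real.exp (r * q.2.2) < q.1.2)} := by
    measurability
  have hZij := (hZ i).prodMk (hZ j)
  rw [← lintegral_const_mul' _ _ ENNReal.ofReal_ne_top]
  refine (hind.measure_preimage_eq_lintegral hZij ((hτ i).prodMk (hτ j)) hS).trans_le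
    (lintegral_mono fun st => ?_)
  by_cases hst : st.1 ∈ Icc 0 T ∧ st.2 ∈ Icc 0 T
  · have hslice : (fun z => (z, st)) ⁻¹' {q : (ℝ × ℝ) × (ℝ × ℝ) |
        (q.2.1 ∈ Icc 0 T ∧ x * Real.exp (r * q.2.1) < q.1.1) ∧
          (q.2.2 ∈ Icc 0 T ∧ x * Real.exp (r * q.2.2) < q.1.2)} =
        Ioi (x * Real.exp (r * st.1)) ×ˢ Ioi (x * Real.exp (r * st.2)) := by
      ext z
      simp only [mem_preimage, mem_ofPred_eq, hst.1, hst.2, true_and, mem_prod, mem_Ioi]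
    have hlt : ∀ s ∈ Icc 0 T, x₀ < x * Real.exp (r * s) := fun s hs =>
      hx.trans_le (le_mul_of_one_le_right (hx₀.trans hx.le)
        (Real.one_le_exp (mul_nonneg hr hs.1)))
    rw [hslice, Measure.map_apply hZij (measurableSet_Ioi.prod measurableSet_Ioi),
      discountedTail, indicator_of_mem hst.1, indicator_of_mem hst.2, ← hG i, ← hG j, ← mul_assoc]
    exact hRD.measure_lt_inter_lt_le hK hij (hlt _ hst.1) (hlt _ hst.2)
  · have hslice : (fun z => (z, st)) ⁻¹' {q : (ℝ × ℝ) × (ℝ × ℝ) |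
        (q.2.1 ∈ Icc 0 T ∧ x * Real.exp (r * q.2.1) < q.1.1) ∧
          (q.2.2 ∈ Icc 0 T ∧ x * Real.exp (r * q.2.2) < q.1.2)} = ∅ :=
      eq_empty_of_forall_notMem fun z hz => hst ⟨hz.1.1, hz.2.1⟩
    rw [hslice, measure_empty]
    exact zero_le

lemma measure_two_le_count_le {x₀ K C : ℝ} (hRD : RDwith P x₀ K Z) (hK : 0 ≤ K)
    (h32 : Assumption32 P τ T C) (hr : 0 ≤ r) (hx₀ : 0 ≤ x₀) (hx : x₀ < x)
    (hZ : ∀ i, Measurable (Z i)) (hτ : ∀ i, Measurable (τ i))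
    (hind : IndepFun (fun ω i => Z i ω) (fun ω i => τ i ω) P)
    (hG : ∀ i u, P {ω | u < Z i ω} = G u) (hG_anti : Antitone G) :
    P {ω | 2 ≤ ∑' i, (arrivalEvent Z τ r T x i).indicator (fun _ => (1 : ℝ≥0∞)) ω} ≤
      ENNReal.ofReal K * (ENNReal.ofReal C * (∑' i, P (arrivalEvent Z τ r T x i)) ^ 2) := by
  set w := discountedTail G r T x
  have hw_supp : (fun q : ℝ × ℝ => w q.1 * w q.2).support ⊆ Icc 0 T ×ˢ Icc 0 T :=
    fun q hq => ⟨support_indicator_subset (left_ne_zero_of_mul hq),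
      support_indicator_subset (right_ne_zero_of_mul hq)⟩
  calc P {ω | 2 ≤ ∑' i, (arrivalEvent Z τ r T x i).indicator (fun _ => (1 : ℝ≥0∞)) ω}
      ≤ ∑' p : {p : ℕ × ℕ // p.1 ≠ p.2},
          P (arrivalEvent Z τ r T x p.1.1 ∩ arrivalEvent Z τ r T x p.1.2) :=
        (measure_mono (setOf_two_le_tsum_indicator_subset _)).trans (measure_iUnion_le _)
    _ ≤ ∑' p : {p : ℕ × ℕ // p.1 ≠ p.2}, ENNReal.ofReal K *
          ∫⁻ q, w q.1 * w q.2 ∂P.map fun ω => (τ p.1.1 ω, τ p.1.2 ω) :=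
        ENNReal.tsum_le_tsum fun p => measure_arrivalEvent_inter_le hRD hK hr hx₀ hx p.2 hZ hτ
          (hind.comp ((measurable_pi_apply _).prodMk (measurable_pi_apply _))
            ((measurable_pi_apply _).prodMk (measurable_pi_apply _))) hG
    _ = ENNReal.ofReal K * ∫⁻ q, w q.1 * w q.2 ∂secondFactorial P τ := by
        rw [ENNReal.tsum_mul_left, secondFactorial, lintegral_sum_measure]
    _ ≤ ENNReal.ofReal K * (ENNReal.ofReal C * ∫⁻ q, w q.1 * w q.2 ∂nuProd P τ) := by
        gcongr
        exact h32.lintegral_secondFactorial_le hw_supp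
    _ = ENNReal.ofReal K * (ENNReal.ofReal C * (∑' i, P (arrivalEvent Z τ r T x i)) ^ 2) := by
        rw [lintegral_nuProd_mul_eq_sq P τ (measurable_discountedTail hG_anti)]
        congr 4 with i
        exact (measure_arrivalEvent (hZ i) (hτ i)
          (hind.comp (measurable_pi_apply i) (measurable_pi_apply i)) (hG i)).symm

lemma measure_arrivalEvent_le {i : ℕ} (hr : 0 ≤ r) (hx : 0 ≤ x) (hZ : Measurable (Z i))
    (hτ : Measurable (τ i)) (hind : IndepFun (Z i) (τ i) P)
    (hG : ∀ u, P {ω | u < Z i ω} = G u) (hG_anti : Antitone G) :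
    P (arrivalEvent Z τ r T x i) ≤ G x * P (τ i ⁻¹' Icc 0 T) := by
  rw [measure_arrivalEvent hZ hτ hind hG, ← Measure.map_apply hτ measurableSet_Icc,
    ← lintegral_indicator_const measurableSet_Icc]
  exact lintegral_mono fun s => indicator_le_indicator' fun hs =>
    hG_anti (le_mul_of_one_le_right hx (Real.one_le_exp (mul_nonneg hr hs.1)))

lemma le_measure_arrivalEvent {i : ℕ} (hr : 0 ≤ r) (hx : 0 ≤ x) (hZ : Measurable (Z i))
    (hτ : Measurable (τ i)) (hind : IndepFun (Z i) (τ i) P)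
    (hG : ∀ u, P {ω | u < Z i ω} = G u) (hG_anti : Antitone G) :
    G (x * Real.exp (r * T)) * P (τ i ⁻¹' Icc 0 T) ≤ P (arrivalEvent Z τ r T x i) := by
  rw [measure_arrivalEvent hZ hτ hind hG, ← Measure.map_apply hτ measurableSet_Icc,
    ← lintegral_indicator_const measurableSet_Icc]
  exact lintegral_mono fun s => indicator_le_indicator' fun hs =>
    hG_anti (mul_le_mul_of_nonneg_left (Real.exp_le_exp.mpr (mul_le_mul_of_nonneg_left hs.2 hr)) hx)

theorem arrivalEvent_asymptotics {x₀ K C : ℝ} (hRD : RDwith P x₀ K Z) (hx₀ : 0 ≤ x₀)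
    (hK : 0 ≤ K) (hC : 0 ≤ C) (h32 : Assumption32 P τ T C) (hr : 0 ≤ r)
    (hZ : ∀ i, Measurable (Z i)) (hτ : ∀ i, Measurable (τ i))
    (hind : IndepFun (fun ω i => Z i ω) (fun ω i => τ i ω) P)
    (hG : ∀ i u, P {ω | u < Z i ω} = G u) (hG_pos : ∀ u, 0 < u → 0 < G u)
    (hm : ∑' i, P (τ i ⁻¹' Icc 0 T) ≠ ⊤) (hm_pos : 0 < ∑' i, P (τ i ⁻¹' Icc 0 T)) :
    (∀ x, 0 < x → 0 < ∑' i, (P (arrivalEvent Z τ r T x i)).toReal) ∧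
      Tendsto (fun x => ∑' i, (P (arrivalEvent Z τ r T x i)).toReal) atTop (𝓝 0) ∧
      ∀ x, x₀ < x →
        (P {ω | 2 ≤ ∑' i, (arrivalEvent Z τ r T x i).indicator (fun _ => (1 : ℝ≥0∞)) ω}).toReal ≤
          K * C * (∑' i, (P (arrivalEvent Z τ r T x i)).toReal) ^ 2 := by
  have hG_anti : Antitone G := fun u v huv => by
    rw [← hG 0 u, ← hG 0 v]
    exact measure_mono fun ω hω => huv.trans_lt hω
  have hG_lim : Tendsto G atTop (𝓝 0) := by
    simpa only [hG 0] using tendsto_measure_setOf_lt_atTop (μ := P) (hZ 0)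
  have hind_i : ∀ i, IndepFun (Z i) (τ i) P := fun i =>
    hind.comp (measurable_pi_apply i) (measurable_pi_apply i)
  have hΛ_ne_top : ∀ x, ∑' i, P (arrivalEvent Z τ r T x i) ≠ ⊤ := fun x =>
    ne_top_of_le_ne_top hm (ENNReal.tsum_le_tsum fun i => measure_mono fun ω hω => hω.1)
  have hΛ_toReal : ∀ x, ∑' i, (P (arrivalEvent Z τ r T x i)).toReal =
      (∑' i, P (arrivalEvent Z τ r T x i)).toReal := fun x =>
    (ENNReal.tsum_toReal_eq fun _ => measure_ne_top _ _).symm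
  simp only [hΛ_toReal]
  refine ⟨fun x hx => ENNReal.toReal_pos (ne_of_gt ?_) (hΛ_ne_top x), ?_, fun x hx => ?_⟩
  · calc 0 < G (x * Real.exp (r * T)) * ∑' i, P (τ i ⁻¹' Icc 0 T) :=
          ENNReal.mul_pos (hG_pos _ (by positivity)).ne' hm_pos.ne'
      _ ≤ ∑' i, P (arrivalEvent Z τ r T x i) := by
          rw [← ENNReal.tsum_mul_left]
          exact ENNReal.tsum_le_tsum fun i =>
            le_measure_arrivalEvent hr hx.le (hZ i) (hτ i) (hind_i i) (hG i) hG_anti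
  · have hΛ_le : ∀ᶠ x in atTop,
        ∑' i, P (arrivalEvent Z τ r T x i) ≤ G x * ∑' i, P (τ i ⁻¹' Icc 0 T) := by
      filter_upwards [eventually_ge_atTop 0] with x hx
      rw [← ENNReal.tsum_mul_left]
      exact ENNReal.tsum_le_tsum fun i =>
        measure_arrivalEvent_le hr hx (hZ i) (hτ i) (hind_i i) (hG i) hG_anti
    have hΛ_lim := tendsto_of_tendsto_of_tendsto_of_le_of_le' tendsto_const_nhds
      (by simpa using ENNReal.Tendsto.mul_const hG_lim (Or.inr hm))
      (Eventually.of_forall fun _ => zero_le) hΛ_le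
    simpa [Function.comp_def] using (ENNReal.tendsto_toReal ENNReal.zero_ne_top).comp hΛ_lim
  · have hbound := measure_two_le_count_le hRD hK h32 hr hx₀ hx hZ hτ hind hG hG_anti
    have hΛ_fin := hΛ_ne_top x
    calc _ ≤ (ENNReal.ofReal K *
          (ENNReal.ofReal C * (∑' i, P (arrivalEvent Z τ r T x i)) ^ 2)).toReal :=
          ENNReal.toReal_mono (by finiteness) hbound
      _ = _ := by
          rw [ENNReal.toReal_mul, ENNReal.toReal_mul, ENNReal.toReal_pow, ENNReal.toReal_ofReal hK,
            ENNReal.toReal_ofReal hC, mul_assoc]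

end ArrivalEvents

lemma InRfam.setOf_discounted_mem_eq_arrivalEvent {Ω : Type*} {d : ℕ} {A : Set (Fin d → ℝ)}
    (hA : InRfam d A) {X : ℕ → Ω → Fin d → ℝ} {τ : ℕ → Ω → ℝ} (hXnn : ∀ i ω, 0 ≤ X i ω)
    (hτnn : ∀ i ω, 0 ≤ τ i ω) {r T x : ℝ} (hx : 0 < x) (i : ℕ) :
    {ω | τ i ω ≤ T ∧ Real.exp (-(r * τ i ω)) • X i ω ∈ x • A} =
      arrivalEvent (fun i ω => projA A (X i ω)) τ r T x i := by
  ext ω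
  simp only [arrivalEvent, mem_ofPred_eq, mem_Icc, hτnn i ω, true_and,
    hA.exp_neg_smul_mem_smul_iff (hXnn i ω) hx]

lemma tendsto_div_of_le_mul_sq {f g : ℝ → ℝ} (hf : ∀ x, 0 ≤ f x)
    (hg_pos : ∀ x, 0 < x → 0 < g x) (hg : Tendsto g atTop (𝓝 0))
    (hfg : ∃ c, ∀ᶠ x in atTop, f x ≤ c * g x ^ 2) :
    Tendsto (fun x => f x / g x) atTop (𝓝 0) := by
  obtain ⟨c, hc⟩ := hfg
  refine squeeze_zero' ?_ ?_ (by simpa using hg.const_mul c)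
  · filter_upwards [eventually_gt_atTop 0] with x hx
    exact div_nonneg (hf x) (hg_pos x hx).le
  · filter_upwards [eventually_gt_atTop 0, hc] with x hx hfx
    rw [div_le_iff₀ (hg_pos x hx)]
    linarith

theorem statement13_general
    {Ω : Type*} [MeasurableSpace Ω] (P : Measure Ω) [IsProbabilityMeasure P]
    {d : ℕ} {A : Set (Fin d → ℝ)} (hA : InRfam d A)
    {r : ℝ} (hr : 0 ≤ r) {T : ℝ}
    (F : Measure (Fin d → ℝ))
    (X : ℕ → Ω → Fin d → ℝ) (τ : ℕ → Ω → ℝ)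
    (hXmeas : ∀ i, Measurable (X i)) (hτmeas : ∀ i, Measurable (τ i))
    (hXnn : ∀ i ω k, 0 ≤ X i ω k)
    (hXdist : ∀ i, P.map (X i) = F)
    (hτnn : ∀ i ω, 0 ≤ τ i ω)
    (hindep : IndepFun (fun ω i => X i ω) (fun ω i => τ i ω) P)
    (hmfin : ∀ t : ℝ, (∑' i : ℕ, P {ω | τ i ω ≤ t}) ≠ ⊤)
    (hmT : 0 < ∑' i : ℕ, P {ω | τ i ω ≤ T})
    {C : ℝ} (hC : 0 ≤ C) (h32 : Assumption32 P τ T C)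
    (hRD : RDA P A X)
    (hFA : ∀ x : ℝ, 0 < x → 0 < F (x • A)) :
    (∀ x : ℝ, 0 < x →
        0 < ∑' i : ℕ, (P {ω | τ i ω ≤ T ∧ Real.exp (-(r * τ i ω)) • X i ω ∈ x • A}).toReal) ∧
      Tendsto (fun x : ℝ =>
          ∑' i : ℕ, (P {ω | τ i ω ≤ T ∧ Real.exp (-(r * τ i ω)) • X i ω ∈ x • A}).toReal)
        atTop (𝓝 0) ∧
      (∃ C' : ℝ, ∀ᶠ x : ℝ in atTop,
        (P {ω | 2 ≤ Jcount r X τ A T x ω}).toReal ≤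
          C' * (∑' i : ℕ,
            (P {ω | τ i ω ≤ T ∧ Real.exp (-(r * τ i ω)) • X i ω ∈ x • A}).toReal) ^ 2) ∧
      Tendsto (fun x : ℝ =>
          (P {ω | 2 ≤ Jcount r X τ A T x ω}).toReal /
            ∑' i : ℕ, (P {ω | τ i ω ≤ T ∧ Real.exp (-(r * τ i ω)) • X i ω ∈ x • A}).toReal)
        atTop (𝓝 0) := by
  obtain ⟨x₀, hx₀, K, hK, hRDw⟩ := hRD
  have hG : ∀ i u, P {ω | u < projA A (X i ω)} = F {z | u < projA A z} := fun i u => by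
    rw [← hXdist i, Measure.map_apply (hXmeas i) (measurableSet_lt measurable_const
      hA.measurable_projA)]
    rfl
  have hτT : ∀ i, τ i ⁻¹' Icc 0 T = {ω | τ i ω ≤ T} := fun i => by
    ext ω
    simp [hτnn i ω]
  obtain ⟨hpos, hlim, hbound⟩ := arrivalEvent_asymptotics (T := T) hRDw hx₀.le hK.le hC h32 hr
    (fun i => hA.measurable_projA.comp (hXmeas i)) hτmeas
    (hindep.comp (measurable_pi_lambda _ fun i => hA.measurable_projA.comp
      (measurable_pi_apply i)) measurable_id) hG
    (fun u hu => (hFA u hu).trans_le (measure_mono fun z => hA.lt_projA_of_mem_smul hu))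
    (by simpa only [hτT] using hmfin T) (by simpa only [hτT] using hmT)
  refine ⟨?pos, ?lim, ?bound,
    tendsto_div_of_le_mul_sq (fun _ => ENNReal.toReal_nonneg) ?pos ?lim ?bound⟩
  case pos =>
    intro x hx
    simpa only [hA.setOf_discounted_mem_eq_arrivalEvent hXnn hτnn hx] using hpos x hx
  case lim =>
    refine hlim.congr' ?_
    filter_upwards [eventually_gt_atTop 0] with x hx
    simp only [hA.setOf_discounted_mem_eq_arrivalEvent hXnn hτnn hx]
  case bound =>
    refine ⟨K * C, ?_⟩
    filter_upwards [eventually_gt_atTop x₀] with x hx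
    simpa only [Jcount,
      hA.setOf_discounted_mem_eq_arrivalEvent hXnn hτnn (hx₀.trans hx)] using hbound x hx

/-- Step (1) in the proof of Theorem 3.1: `Λ_x > 0` for all `x > 0`, `Λ_x → 0`, and
`P(J_x(T) ≥ 2) = O(Λ_x²) = o(Λ_x)` as `x → ∞`. -/
theorem statement13
    {Ω : Type*} [MeasurableSpace Ω] (P : Measure Ω) [IsProbabilityMeasure P]
    {d : ℕ} (hd : 1 ≤ d) {A : Set (Fin d → ℝ)} (hA : InRfam d A)
    {r : ℝ} (hr : 0 ≤ r) {T : ℝ} (hT : 0 < T)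
    (F : Measure (Fin d → ℝ)) [IsProbabilityMeasure F]
    (X : ℕ → Ω → Fin d → ℝ) (τ : ℕ → Ω → ℝ)
    (hXmeas : ∀ i, Measurable (X i)) (hτmeas : ∀ i, Measurable (τ i))
    (hXnn : ∀ i ω k, 0 ≤ X i ω k)
    (hXdist : ∀ i, P.map (X i) = F)
    (hτnn : ∀ i ω, 0 ≤ τ i ω) (hτmono : ∀ i ω, τ i ω ≤ τ (i + 1) ω)
    (hindep : IndepFun (fun ω i => X i ω) (fun ω i => τ i ω) P)
    (hmfin : ∀ t : ℝ, (∑' i : ℕ, P {ω | τ i ω ≤ t}) ≠ ⊤)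
    (hmT : 0 < ∑' i : ℕ, P {ω | τ i ω ≤ T})
    {C : ℝ} (hC : 0 ≤ C) (h32 : Assumption32 P τ T C)
    (hRD : RDA P A X)
    (hFA : ∀ x : ℝ, 0 < x → 0 < F (x • A)) :
    (∀ x : ℝ, 0 < x →
        0 < ∑' i : ℕ, (P {ω | τ i ω ≤ T ∧ Real.exp (-(r * τ i ω)) • X i ω ∈ x • A}).toReal) ∧
      Tendsto (fun x : ℝ =>
          ∑' i : ℕ, (P {ω | τ i ω ≤ T ∧ Real.exp (-(r * τ i ω)) • X i ω ∈ x • A}).toReal)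
        atTop (𝓝 0) ∧
      (∃ C' : ℝ, ∀ᶠ x : ℝ in atTop,
        (P {ω | 2 ≤ Jcount r X τ A T x ω}).toReal ≤
          C' * (∑' i : ℕ,
            (P {ω | τ i ω ≤ T ∧ Real.exp (-(r * τ i ω)) • X i ω ∈ x • A}).toReal) ^ 2) ∧
      Tendsto (fun x : ℝ =>
          (P {ω | 2 ≤ Jcount r X τ A T x ω}).toReal /
            ∑' i : ℕ, (P {ω | τ i ω ≤ T ∧ Real.exp (-(r * τ i ω)) • X i ω ∈ x • A}).toReal)
        atTop (𝓝 0) :=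
  statement13_general P hA hr F X τ hXmeas hτmeas hXnn hXdist hτnn hindep hmfin hmT hC h32 hRD hFA
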